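/- Let U ∈ ℝ, μ ≥ 0, D > 0, L > 0, T > 0. Let φ be a twice continuously differentiable function of (t,x,z) ∈ [0,T] × ℝ × [0,∞), spatially supported in a fixed compact set for all t, satisfying (∂_t + U∂ₓ)²φ = Δφ − μφ on [0,T] × ℝ × (0,∞); set ψ = ∂_tφ + U∂ₓφ. Let w be a smooth function on [0,L] × [0,T] with the clamped–free boundary conditions w(0,t) = ∂ₓw(0,t) = 0 and ∂ₓ²w(L,t) = ∂ₓ³w(L,t) = 0 for all t, satisfying the beam equation w_tt + D∂ₓ⁴w = ψ(t,x,0) on (0,L) × (0,T). Assume the coupling conditions: ∂_zφ(t,x,0) = w_t(x,t) + U wₓ(x,t) for x ∈ (0,L) (impermeability), and ψ(t,x,0) = 0 for x ∉ [0,L] (Kutta–Joukowsky condition). Define the total energy ℰ(t) = ½ ∫₀^L ( w_t² + D w_xx² ) dx + ½ ∫_{ℝ×(0,∞)} ( ψ² + |∂ₓφ|² + |∂_zφ|² + μφ² ) dx dz. Then for every t ∈ [0,T]: ℰ(t) + U ∫₀^t ∫₀^L wₓ(x,τ) ψ(τ,x,0) dx dτ = ℰ(0). -/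

import Mathlib

open MeasureTheory Real Set intervalIntegral

/-- The open upper half-plane `ℝ²₊ = ℝ × (0,∞)`, as a subset of `ℝ × ℝ`. -/
def upperHalfPlane2 : Set (ℝ × ℝ) := {p : ℝ × ℝ | 0 < p.2}

/-- Partial derivative in the time variable `t` of `f : (t,x,z) ↦ f(t,x,z)`. -/
noncomputable def pT (f : ℝ × ℝ × ℝ → ℝ) : ℝ × ℝ × ℝ → ℝ :=
  fun p => deriv (fun t => f (t, p.2.1, p.2.2)) p.1

/-- Partial derivative in the horizontal variable `x` of `f : (t,x,z) ↦ f(t,x,z)`. -/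
noncomputable def pX3 (f : ℝ × ℝ × ℝ → ℝ) : ℝ × ℝ × ℝ → ℝ :=
  fun p => deriv (fun x => f (p.1, x, p.2.2)) p.2.1

/-- Partial derivative in the vertical variable `z` of `f : (t,x,z) ↦ f(t,x,z)`. -/
noncomputable def pZ3 (f : ℝ × ℝ × ℝ → ℝ) : ℝ × ℝ × ℝ → ℝ :=
  fun p => deriv (fun z => f (p.1, p.2.1, z)) p.2.2

/-- Partial derivative in the spatial variable `x` of `w : (x,t) ↦ w(x,t)`. -/
noncomputable def dX (w : ℝ → ℝ → ℝ) : ℝ → ℝ → ℝ := fun x t => deriv (fun y => w y t) x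

/-- Partial derivative in the time variable `t` of `w : (x,t) ↦ w(x,t)`. -/
noncomputable def dT (w : ℝ → ℝ → ℝ) : ℝ → ℝ → ℝ := fun x t => deriv (fun s => w x s) t





section slices

lemma hasDerivAt_sliceT (f : ℝ × ℝ × ℝ → ℝ) {t x z : ℝ}
    (hf : DifferentiableAt ℝ f (t, x, z)) :
    HasDerivAt (fun s => f (s, x, z)) (fderiv ℝ f (t, x, z) (1, 0, 0)) t := by
  have hA : HasDerivAt (fun s : ℝ => ((s, x, z) : ℝ × ℝ × ℝ)) (1, 0, 0) t :=
    HasDerivAt.prodMk (hasDerivAt_id t) (hasDerivAt_const t (x, z))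
  exact hf.hasFDerivAt.comp_hasDerivAt t hA

lemma hasDerivAt_sliceX (f : ℝ × ℝ × ℝ → ℝ) {t x z : ℝ}
    (hf : DifferentiableAt ℝ f (t, x, z)) :
    HasDerivAt (fun y => f (t, y, z)) (fderiv ℝ f (t, x, z) (0, 1, 0)) x := by
  have hA : HasDerivAt (fun y : ℝ => ((t, y, z) : ℝ × ℝ × ℝ)) (0, 1, 0) x :=
    HasDerivAt.prodMk (hasDerivAt_const x t) (HasDerivAt.prodMk (hasDerivAt_id x) (hasDerivAt_const x z))
  exact hf.hasFDerivAt.comp_hasDerivAt x hA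

lemma hasDerivAt_sliceZ (f : ℝ × ℝ × ℝ → ℝ) {t x z : ℝ}
    (hf : DifferentiableAt ℝ f (t, x, z)) :
    HasDerivAt (fun u => f (t, x, u)) (fderiv ℝ f (t, x, z) (0, 0, 1)) z := by
  have hA : HasDerivAt (fun u : ℝ => ((t, x, u) : ℝ × ℝ × ℝ)) (0, 0, 1) z :=
    HasDerivAt.prodMk (hasDerivAt_const z t) (HasDerivAt.prodMk (hasDerivAt_const z x) (hasDerivAt_id z))
  exact hf.hasFDerivAt.comp_hasDerivAt z hA

lemma pT_eq (f : ℝ × ℝ × ℝ → ℝ) (hf : Differentiable ℝ f) (t x z : ℝ) :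
    pT f (t, x, z) = fderiv ℝ f (t, x, z) (1, 0, 0) :=
  (hasDerivAt_sliceT f (hf _)).deriv

lemma pX3_eq (f : ℝ × ℝ × ℝ → ℝ) (hf : Differentiable ℝ f) (t x z : ℝ) :
    pX3 f (t, x, z) = fderiv ℝ f (t, x, z) (0, 1, 0) :=
  (hasDerivAt_sliceX f (hf _)).deriv

lemma pZ3_eq (f : ℝ × ℝ × ℝ → ℝ) (hf : Differentiable ℝ f) (t x z : ℝ) :
    pZ3 f (t, x, z) = fderiv ℝ f (t, x, z) (0, 0, 1) :=
  (hasDerivAt_sliceZ f (hf _)).deriv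

lemma hasDerivAt_slice1 (F : ℝ × ℝ → ℝ) {x t : ℝ} (hf : DifferentiableAt ℝ F (x, t)) :
    HasDerivAt (fun y => F (y, t)) (fderiv ℝ F (x, t) (1, 0)) x := by
  have hA : HasDerivAt (fun y : ℝ => ((y, t) : ℝ × ℝ)) (1, 0) x :=
    HasDerivAt.prodMk (hasDerivAt_id x) (hasDerivAt_const x t)
  exact hf.hasFDerivAt.comp_hasDerivAt x hA

lemma hasDerivAt_slice2 (F : ℝ × ℝ → ℝ) {x t : ℝ} (hf : DifferentiableAt ℝ F (x, t)) :
    HasDerivAt (fun s => F (x, s)) (fderiv ℝ F (x, t) (0, 1)) t := by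
  have hA : HasDerivAt (fun s : ℝ => ((x, s) : ℝ × ℝ)) (0, 1) t :=
    HasDerivAt.prodMk (hasDerivAt_const t x) (hasDerivAt_id t)
  exact hf.hasFDerivAt.comp_hasDerivAt t hA

end slices


section helpers
variable {E : Type*} [NormedAddCommGroup E] [NormedSpace ℝ E]

lemma fderiv_apply_mul {A B : E → ℝ} {p : E} (hA : DifferentiableAt ℝ A p)
    (hB : DifferentiableAt ℝ B p) (u : E) :
    fderiv ℝ (fun q => A q * B q) p u = fderiv ℝ A p u * B p + A p * fderiv ℝ B p u := by
  rw [fderiv_fun_mul hA hB]; simp; ring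

lemma fderiv_apply_add {A B : E → ℝ} {p : E} (hA : DifferentiableAt ℝ A p)
    (hB : DifferentiableAt ℝ B p) (u : E) :
    fderiv ℝ (fun q => A q + B q) p u = fderiv ℝ A p u + fderiv ℝ B p u := by
  rw [fderiv_fun_add hA hB]; simp

lemma fderiv_apply_sub {A B : E → ℝ} {p : E} (hA : DifferentiableAt ℝ A p)
    (hB : DifferentiableAt ℝ B p) (u : E) :
    fderiv ℝ (fun q => A q - B q) p u = fderiv ℝ A p u - fderiv ℝ B p u := by
  rw [fderiv_fun_sub hA hB]; simp

lemma fderiv_apply_const_mul {B : E → ℝ} {p : E} (hB : DifferentiableAt ℝ B p) (c : ℝ) (u : E) :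
    fderiv ℝ (fun q => c * B q) p u = c * fderiv ℝ B p u := by
  rw [fderiv_const_mul hB]; simp

lemma contDiff_one_fderiv_apply {F : E → ℝ} (hF : ContDiff ℝ 2 F) (v : E) :
    ContDiff ℝ 1 (fun q => fderiv ℝ F q v) := by
  have h1 : ContDiff ℝ 1 (fderiv ℝ F) := hF.fderiv_right (by norm_num)
  exact (ContinuousLinearMap.apply ℝ ℝ v).contDiff.comp h1

lemma contDiff_top_fderiv_apply {F : E → ℝ} (hF : ContDiff ℝ (⊤ : ℕ∞) F) (v : E) :
    ContDiff ℝ (⊤ : ℕ∞) (fun q => fderiv ℝ F q v) := by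
  have h1 : ContDiff ℝ (⊤ : ℕ∞) (fderiv ℝ F) := hF.fderiv_right (by simp)
  exact (ContinuousLinearMap.apply ℝ ℝ v).contDiff.comp h1

lemma fderiv_fderiv_apply {F : E → ℝ} (hF : ContDiff ℝ 2 F) (p u v : E) :
    fderiv ℝ (fun q => fderiv ℝ F q v) p u = fderiv ℝ (fderiv ℝ F) p u v := by
  have h1 : ContDiff ℝ 1 (fderiv ℝ F) := hF.fderiv_right (by norm_num)
  have h2 : HasFDerivAt (fderiv ℝ F) (fderiv ℝ (fderiv ℝ F) p) p :=
    (h1.differentiable one_ne_zero p).hasFDerivAt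
  have h3 : HasFDerivAt (fun q => fderiv ℝ F q v)
      ((ContinuousLinearMap.apply ℝ ℝ v).comp (fderiv ℝ (fderiv ℝ F) p)) p :=
    (ContinuousLinearMap.apply ℝ ℝ v).hasFDerivAt.comp p h2
  rw [h3.fderiv]; rfl

lemma fderiv_apply_symm {F : E → ℝ} (hF : ContDiff ℝ 2 F) (p u v : E) :
    fderiv ℝ (fun q => fderiv ℝ F q v) p u = fderiv ℝ (fun q => fderiv ℝ F q u) p v := by
  rw [fderiv_fderiv_apply hF, fderiv_fderiv_apply hF]
  have hf : ∀ y, HasFDerivAt F (fderiv ℝ F y) y := fun y =>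
    (hF.differentiable two_ne_zero y).hasFDerivAt
  have h1 : ContDiff ℝ 1 (fderiv ℝ F) := hF.fderiv_right (by norm_num)
  exact second_derivative_symmetric hf ((h1.differentiable one_ne_zero p).hasFDerivAt) u v

end helpers

/-! Fluid-side fields -/

noncomputable def PsiF (U : ℝ) (φ : ℝ × ℝ × ℝ → ℝ) : ℝ × ℝ × ℝ → ℝ :=
  fun p => fderiv ℝ φ p (1, 0, 0) + U * fderiv ℝ φ p (0, 1, 0)

noncomputable def fE (U μ : ℝ) (φ : ℝ × ℝ × ℝ → ℝ) : ℝ × ℝ × ℝ → ℝ :=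
  fun p => PsiF U φ p * PsiF U φ p + fderiv ℝ φ p (0, 1, 0) * fderiv ℝ φ p (0, 1, 0)
    + fderiv ℝ φ p (0, 0, 1) * fderiv ℝ φ p (0, 0, 1) + μ * (φ p * φ p)

noncomputable def fFX (U μ : ℝ) (φ : ℝ × ℝ × ℝ → ℝ) : ℝ × ℝ × ℝ → ℝ :=
  fun p => U * fE U μ φ p - 2 * (PsiF U φ p * fderiv ℝ φ p (0, 1, 0))

noncomputable def fQ (U : ℝ) (φ : ℝ × ℝ × ℝ → ℝ) : ℝ × ℝ × ℝ → ℝ :=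
  fun p => 2 * (PsiF U φ p * fderiv ℝ φ p (0, 0, 1))

section fluid
variable {U μ : ℝ} {φ : ℝ × ℝ × ℝ → ℝ}

lemma PsiF_contDiff (hφ : ContDiff ℝ 2 φ) : ContDiff ℝ 1 (PsiF U φ) :=
  (contDiff_one_fderiv_apply hφ _).add ((contDiff_one_fderiv_apply hφ _).const_smul U)

lemma fE_contDiff (hφ : ContDiff ℝ 2 φ) : ContDiff ℝ 1 (fE U μ φ) := by
  have hg : ∀ v : ℝ × ℝ × ℝ, ContDiff ℝ 1 (fun q => fderiv ℝ φ q v) :=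
    contDiff_one_fderiv_apply hφ
  have hΨ : ContDiff ℝ 1 (PsiF U φ) := PsiF_contDiff hφ
  have h2 := hφ.of_le one_le_two
  exact (((hΨ.mul hΨ).add ((hg _).mul (hg _))).add ((hg _).mul (hg _))).add
    (contDiff_const.mul (h2.mul h2))

lemma fFX_contDiff (hφ : ContDiff ℝ 2 φ) : ContDiff ℝ 1 (fFX U μ φ) :=
  (contDiff_const.mul (fE_contDiff hφ)).sub
    (contDiff_const.mul ((PsiF_contDiff hφ).mul (contDiff_one_fderiv_apply hφ _)))

lemma fQ_contDiff (hφ : ContDiff ℝ 2 φ) : ContDiff ℝ 1 (fQ U φ) :=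
  contDiff_const.mul ((PsiF_contDiff hφ).mul (contDiff_one_fderiv_apply hφ _))

/-- The pointwise divergence identity for the fluid energy fields. -/
lemma fluid_div (hφ : ContDiff ℝ 2 φ) (p : ℝ × ℝ × ℝ)
    (hpde : fderiv ℝ (PsiF U φ) p (1, 0, 0) + U * fderiv ℝ (PsiF U φ) p (0, 1, 0)
      = fderiv ℝ (fun q => fderiv ℝ φ q (0, 1, 0)) p (0, 1, 0)
        + fderiv ℝ (fun q => fderiv ℝ φ q (0, 0, 1)) p (0, 0, 1) - μ * φ p) :
    fderiv ℝ (fE U μ φ) p (1, 0, 0) + fderiv ℝ (fFX U μ φ) p (0, 1, 0)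
      = fderiv ℝ (fQ U φ) p (0, 0, 1) := by
  have dφ : Differentiable ℝ φ := hφ.differentiable two_ne_zero
  have dg : ∀ v, Differentiable ℝ (fun q => fderiv ℝ φ q v) := fun v =>
    (contDiff_one_fderiv_apply hφ v).differentiable one_ne_zero
  have dΨ : Differentiable ℝ (PsiF U φ) := (PsiF_contDiff hφ).differentiable one_ne_zero
  have dE : Differentiable ℝ (fE U μ φ) := (fE_contDiff hφ).differentiable one_ne_zero
  have dφ2 : Differentiable ℝ (fun q => μ * (φ q * φ q)) :=
    ((dφ.mul dφ).const_mul μ)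
  -- expand Ψ derivatives
  have hΨd : ∀ u : ℝ × ℝ × ℝ, fderiv ℝ (PsiF U φ) p u
      = fderiv ℝ (fun q => fderiv ℝ φ q (1, 0, 0)) p u
        + U * fderiv ℝ (fun q => fderiv ℝ φ q (0, 1, 0)) p u := by
    intro u
    have : PsiF U φ = fun q => (fun q => fderiv ℝ φ q (1, 0, 0)) q
        + U * (fun q => fderiv ℝ φ q (0, 1, 0)) q := rfl
    rw [this, fderiv_apply_add (dg _ _) ((dg _ _).const_mul U),
      fderiv_apply_const_mul (dg _ _)]
  -- expand fE derivative
  have hEd : ∀ u : ℝ × ℝ × ℝ, fderiv ℝ (fE U μ φ) p u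
      = 2 * PsiF U φ p * fderiv ℝ (PsiF U φ) p u
        + 2 * fderiv ℝ φ p (0, 1, 0) * fderiv ℝ (fun q => fderiv ℝ φ q (0, 1, 0)) p u
        + 2 * fderiv ℝ φ p (0, 0, 1) * fderiv ℝ (fun q => fderiv ℝ φ q (0, 0, 1)) p u
        + 2 * μ * φ p * fderiv ℝ φ p u := by
    intro u
    have he : fE U μ φ = fun q => ((PsiF U φ q * PsiF U φ q
        + (fun q => fderiv ℝ φ q (0, 1, 0)) q * (fun q => fderiv ℝ φ q (0, 1, 0)) q)
        + ((fun q => fderiv ℝ φ q (0, 0, 1)) q * (fun q => fderiv ℝ φ q (0, 0, 1)) q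
        + μ * (φ q * φ q))) := by funext q; simp [fE]; ring
    rw [he, fderiv_apply_add (((dΨ p).fun_mul (dΨ p)).fun_add ((dg _ _).fun_mul (dg _ _)))
        (((dg _ _).fun_mul (dg _ _)).fun_add (dφ2 p)),
      fderiv_apply_add ((dΨ p).fun_mul (dΨ p)) ((dg _ _).fun_mul (dg _ _)),
      fderiv_apply_add ((dg _ _).fun_mul (dg _ _)) (dφ2 p),
      fderiv_apply_mul (dΨ p) (dΨ p), fderiv_apply_mul (dg _ _) (dg _ _),
      fderiv_apply_mul (dg _ _) (dg _ _),
      fderiv_apply_const_mul ((dφ p).fun_mul (dφ p)), fderiv_apply_mul (dφ p) (dφ p)]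
    ring
  -- expand fFX derivative in direction (0,1,0)
  have hFXd : fderiv ℝ (fFX U μ φ) p (0, 1, 0)
      = U * fderiv ℝ (fE U μ φ) p (0, 1, 0)
        - 2 * (fderiv ℝ (PsiF U φ) p (0, 1, 0) * fderiv ℝ φ p (0, 1, 0)
          + PsiF U φ p * fderiv ℝ (fun q => fderiv ℝ φ q (0, 1, 0)) p (0, 1, 0)) := by
    have he : fFX U μ φ = fun q => U * fE U μ φ q
        - 2 * ((fun q => PsiF U φ q * (fun q => fderiv ℝ φ q (0, 1, 0)) q) q) := rfl
    rw [he, fderiv_apply_sub ((dE p).const_mul U) (((dΨ p).fun_mul (dg _ _)).const_mul 2),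
      fderiv_apply_const_mul (dE p), fderiv_apply_const_mul ((dΨ p).fun_mul (dg _ _)),
      fderiv_apply_mul (dΨ p) (dg _ _)]
  -- expand fQ derivative in direction (0,0,1)
  have hQd : fderiv ℝ (fQ U φ) p (0, 0, 1)
      = 2 * (fderiv ℝ (PsiF U φ) p (0, 0, 1) * fderiv ℝ φ p (0, 0, 1)
          + PsiF U φ p * fderiv ℝ (fun q => fderiv ℝ φ q (0, 0, 1)) p (0, 0, 1)) := by
    have he : fQ U φ = fun q => 2 * ((fun q => PsiF U φ q * (fun q => fderiv ℝ φ q (0, 0, 1)) q) q) := rfl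
    rw [he, fderiv_apply_const_mul ((dΨ p).fun_mul (dg _ _)), fderiv_apply_mul (dΨ p) (dg _ _)]
  rw [hEd, hFXd, hQd, hEd, hΨd, hΨd, hΨd]
  rw [fderiv_apply_symm hφ p (0,1,0) (1,0,0), fderiv_apply_symm hφ p (0,0,1) (1,0,0),
    fderiv_apply_symm hφ p (0,0,1) (0,1,0)]
  have hψval : PsiF U φ p = fderiv ℝ φ p (1, 0, 0) + U * fderiv ℝ φ p (0, 1, 0) := rfl
  rw [hΨd, hΨd] at hpde
  rw [fderiv_apply_symm hφ p (0,1,0) (1,0,0)] at hpde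
  linear_combination (2 * PsiF U φ p) * hpde + (-(2:ℝ) * μ * φ p) * hψval
end fluid
/-! Beam-side fields; coordinates `q = (x, t)`. -/
noncomputable def Wf (w : ℝ → ℝ → ℝ) : ℝ × ℝ → ℝ := fun q => w q.1 q.2
noncomputable def W1 (w : ℝ → ℝ → ℝ) : ℝ × ℝ → ℝ := fun q => fderiv ℝ (Wf w) q (1, 0)
noncomputable def W2 (w : ℝ → ℝ → ℝ) : ℝ × ℝ → ℝ := fun q => fderiv ℝ (W1 w) q (1, 0)
noncomputable def W3 (w : ℝ → ℝ → ℝ) : ℝ × ℝ → ℝ := fun q => fderiv ℝ (W2 w) q (1, 0)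
noncomputable def W4 (w : ℝ → ℝ → ℝ) : ℝ × ℝ → ℝ := fun q => fderiv ℝ (W3 w) q (1, 0)
noncomputable def WT (w : ℝ → ℝ → ℝ) : ℝ × ℝ → ℝ := fun q => fderiv ℝ (Wf w) q (0, 1)
noncomputable def WT1 (w : ℝ → ℝ → ℝ) : ℝ × ℝ → ℝ := fun q => fderiv ℝ (W1 w) q (0, 1)
noncomputable def WTT (w : ℝ → ℝ → ℝ) : ℝ × ℝ → ℝ := fun q => fderiv ℝ (WT w) q (0, 1)

noncomputable def bE (D : ℝ) (w : ℝ → ℝ → ℝ) : ℝ × ℝ → ℝ :=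
  fun q => WT w q * WT w q + D * (W2 w q * W2 w q)
noncomputable def bG (D : ℝ) (w : ℝ → ℝ → ℝ) : ℝ × ℝ → ℝ :=
  fun q => 2 * D * (WT w q * W3 w q - WT1 w q * W2 w q)

section beam
variable {w : ℝ → ℝ → ℝ} {D : ℝ}

lemma W1_smooth (hw : ContDiff ℝ (⊤ : ℕ∞) (Wf w)) : ContDiff ℝ (⊤ : ℕ∞) (W1 w) := contDiff_top_fderiv_apply hw _
lemma W2_smooth (hw : ContDiff ℝ (⊤ : ℕ∞) (Wf w)) : ContDiff ℝ (⊤ : ℕ∞) (W2 w) :=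
  contDiff_top_fderiv_apply (W1_smooth hw) _
lemma W3_smooth (hw : ContDiff ℝ (⊤ : ℕ∞) (Wf w)) : ContDiff ℝ (⊤ : ℕ∞) (W3 w) :=
  contDiff_top_fderiv_apply (W2_smooth hw) _
lemma WT_smooth (hw : ContDiff ℝ (⊤ : ℕ∞) (Wf w)) : ContDiff ℝ (⊤ : ℕ∞) (WT w) := contDiff_top_fderiv_apply hw _
lemma WT1_smooth (hw : ContDiff ℝ (⊤ : ℕ∞) (Wf w)) : ContDiff ℝ (⊤ : ℕ∞) (WT1 w) :=
  contDiff_top_fderiv_apply (W1_smooth hw) _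
lemma bE_smooth (hw : ContDiff ℝ (⊤ : ℕ∞) (Wf w)) : ContDiff ℝ (⊤ : ℕ∞) (bE D w) :=
  ((WT_smooth hw).mul (WT_smooth hw)).add
    (contDiff_const.mul ((W2_smooth hw).mul (W2_smooth hw)))
lemma bG_smooth (hw : ContDiff ℝ (⊤ : ℕ∞) (Wf w)) : ContDiff ℝ (⊤ : ℕ∞) (bG D w) :=
  contDiff_const.mul (((WT_smooth hw).mul (W3_smooth hw)).sub
    ((WT1_smooth hw).mul (W2_smooth hw)))

/-- Pointwise beam divergence identity. -/
lemma beam_div (hw : ContDiff ℝ (⊤ : ℕ∞) (Wf w)) (q : ℝ × ℝ) :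
    fderiv ℝ (bE D w) q (0, 1) + fderiv ℝ (bG D w) q (1, 0)
      = 2 * WT w q * (WTT w q + D * W4 w q) := by
  have dWT := (WT_smooth (w := w) hw).differentiable (by simp)
  have dW2 := (W2_smooth (w := w) hw).differentiable (by simp)
  have dW3 := (W3_smooth (w := w) hw).differentiable (by simp)
  have dWT1 := (WT1_smooth (w := w) hw).differentiable (by simp)
  have hbE : fderiv ℝ (bE D w) q (0, 1)
      = (fderiv ℝ (WT w) q (0,1) * WT w q + WT w q * fderiv ℝ (WT w) q (0,1))
        + D * (fderiv ℝ (W2 w) q (0,1) * W2 w q + W2 w q * fderiv ℝ (W2 w) q (0,1)) := by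
    have he : bE D w = fun q => (fun q => WT w q * WT w q) q
        + D * (fun q => W2 w q * W2 w q) q := rfl
    rw [he, fderiv_fun_add ((dWT q).fun_mul (dWT q)) (((dW2 q).fun_mul (dW2 q)).const_mul D)]
    rw [ContinuousLinearMap.add_apply, fderiv_const_mul ((dW2 q).fun_mul (dW2 q))]
    rw [fderiv_apply_mul (dWT q) (dWT q)]
    simp [fderiv_apply_mul (dW2 q) (dW2 q)]
  have hbG : fderiv ℝ (bG D w) q (1, 0)
      = 2 * D * ((fderiv ℝ (WT w) q (1,0) * W3 w q + WT w q * fderiv ℝ (W3 w) q (1,0))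
        - (fderiv ℝ (WT1 w) q (1,0) * W2 w q + WT1 w q * fderiv ℝ (W2 w) q (1,0))) := by
    have he : bG D w = fun p => (2*D) * ((fun p => WT w p * W3 w p) p
        - (fun p => WT1 w p * W2 w p) p) := rfl
    rw [he, fderiv_const_mul (((dWT q).fun_mul (dW3 q)).fun_sub ((dWT1 q).fun_mul (dW2 q)))]
    rw [ContinuousLinearMap.smul_apply,
      fderiv_fun_sub ((dWT q).fun_mul (dW3 q)) ((dWT1 q).fun_mul (dW2 q)), ContinuousLinearMap.sub_apply,
      fderiv_apply_mul (dWT q) (dW3 q), fderiv_apply_mul (dWT1 q) (dW2 q)]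
    simp
  have sym1 : fderiv ℝ (WT w) q (1, 0) = WT1 w q := by
    have : WT w = fun p => fderiv ℝ (Wf w) p (0, 1) := rfl
    rw [this, fderiv_apply_symm (hw.of_le (m := 2) (WithTop.coe_le_coe.mpr le_top)) q (1,0) (0,1)]; rfl
  have sym2 : fderiv ℝ (W2 w) q (0, 1) = fderiv ℝ (WT1 w) q (1, 0) := by
    have h1 : W2 w = fun p => fderiv ℝ (W1 w) p (1, 0) := rfl
    have h2 : WT1 w = fun p => fderiv ℝ (W1 w) p (0, 1) := rfl
    rw [h1, h2, fderiv_apply_symm ((W1_smooth hw).of_le (m := 2) (WithTop.coe_le_coe.mpr le_top)) q (0,1) (1,0)]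
  have h3 : fderiv ℝ (W3 w) q (1, 0) = W4 w q := rfl
  have h4 : fderiv ℝ (W2 w) q (1, 0) = W3 w q := rfl
  have h5 : fderiv ℝ (WT w) q (0, 1) = WTT w q := rfl
  rw [hbE, hbG, sym1, sym2, h3, h4, h5]
  ring

/-- Conversions between curried `dX/dT` derivatives and the `W`-fields. -/
lemma cW1 (hw : ContDiff ℝ (⊤ : ℕ∞) (Wf w)) (x t : ℝ) : dX w x t = W1 w (x, t) :=
  (hasDerivAt_slice1 (Wf w) ((hw.differentiable (by simp)) _)).deriv
lemma cWT (hw : ContDiff ℝ (⊤ : ℕ∞) (Wf w)) (x t : ℝ) : dT w x t = WT w (x, t) :=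
  (hasDerivAt_slice2 (Wf w) ((hw.differentiable (by simp)) _)).deriv
lemma cW2 (hw : ContDiff ℝ (⊤ : ℕ∞) (Wf w)) (x t : ℝ) : dX (dX w) x t = W2 w (x, t) := by
  have h : (fun y => dX w y t) = fun y => W1 w (y, t) := funext fun y => cW1 hw y t
  show deriv (fun y => dX w y t) x = _
  rw [h]
  exact (hasDerivAt_slice1 (W1 w) (((W1_smooth hw).differentiable (by simp)) _)).deriv
lemma cW3 (hw : ContDiff ℝ (⊤ : ℕ∞) (Wf w)) (x t : ℝ) : dX (dX (dX w)) x t = W3 w (x, t) := by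
  have h : (fun y => dX (dX w) y t) = fun y => W2 w (y, t) := funext fun y => cW2 hw y t
  show deriv (fun y => dX (dX w) y t) x = _
  rw [h]
  exact (hasDerivAt_slice1 (W2 w) (((W2_smooth hw).differentiable (by simp)) _)).deriv
lemma cW4 (hw : ContDiff ℝ (⊤ : ℕ∞) (Wf w)) (x t : ℝ) : dX (dX (dX (dX w))) x t = W4 w (x, t) := by
  have h : (fun y => dX (dX (dX w)) y t) = fun y => W3 w (y, t) := funext fun y => cW3 hw y t
  show deriv (fun y => dX (dX (dX w)) y t) x = _
  rw [h]
  exact (hasDerivAt_slice1 (W3 w) (((W3_smooth hw).differentiable (by simp)) _)).deriv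
lemma cWT1 (hw : ContDiff ℝ (⊤ : ℕ∞) (Wf w)) (x t : ℝ) : dT (dX w) x t = WT1 w (x, t) := by
  have h : (fun s => dX w x s) = fun s => W1 w (x, s) := funext fun s => cW1 hw x s
  show deriv (fun s => dX w x s) t = _
  rw [h]
  exact (hasDerivAt_slice2 (W1 w) (((W1_smooth hw).differentiable (by simp)) _)).deriv
lemma cWTT (hw : ContDiff ℝ (⊤ : ℕ∞) (Wf w)) (x t : ℝ) : dT (dT w) x t = WTT w (x, t) := by
  have h : (fun s => dT w x s) = fun s => WT w (x, s) := funext fun s => cWT hw x s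
  show deriv (fun s => dT w x s) t = _
  rw [h]
  exact (hasDerivAt_slice2 (WT w) (((WT_smooth hw).differentiable (by simp)) _)).deriv

end beam


/-- Fubini swap for iterated interval integrals of a continuous function. -/
lemma swapII {f : ℝ → ℝ → ℝ} (hf : Continuous (Function.uncurry f)) {a b c d : ℝ}
    (hab : a ≤ b) (hcd : c ≤ d) :
    ∫ x in a..b, ∫ y in c..d, f x y = ∫ y in c..d, ∫ x in a..b, f x y := by
  simp only [intervalIntegral.integral_of_le hab, intervalIntegral.integral_of_le hcd]
  apply MeasureTheory.integral_integral_swap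
  rw [Measure.prod_restrict]
  have h1 : IntegrableOn (Function.uncurry f) (Icc a b ×ˢ Icc c d) (volume.prod volume) := by
    rw [← Measure.volume_eq_prod]
    exact hf.continuousOn.integrableOn_compact (isCompact_Icc.prod isCompact_Icc)
  exact h1.mono_set (prod_mono Ioc_subset_Icc_self Ioc_subset_Icc_self)

/-- The derivative of a differentiable function vanishing on `[a,b]` vanishes on `[a,b]`. -/
lemma deriv_zero_of_vanish {f : ℝ → ℝ} {t a b : ℝ} (hf : DifferentiableAt ℝ f t)
    (hab : a < b) (ht : t ∈ Icc a b) (h0 : EqOn f 0 (Icc a b)) : deriv f t = 0 := by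
  rcases lt_or_ge t b with h | h
  · have hu : UniqueDiffWithinAt ℝ (Icc t b) t := (uniqueDiffOn_Icc h) t ⟨le_rfl, h.le⟩
    have h1 : derivWithin f (Icc t b) t = deriv f t :=
      (hf.hasDerivAt.hasDerivWithinAt).derivWithin hu
    rw [← h1, derivWithin_congr (h0.mono (Icc_subset_Icc ht.1 le_rfl)) (h0 ht)]
    exact congrFun (derivWithin_fun_const (s := _) (c := (0:ℝ))) t
  · have htb : t = b := le_antisymm ht.2 h
    subst htb
    have hu : UniqueDiffWithinAt ℝ (Icc a t) t := (uniqueDiffOn_Icc hab) t ⟨ht.1, le_rfl⟩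
    have h1 : derivWithin f (Icc a t) t = deriv f t :=
      (hf.hasDerivAt.hasDerivWithinAt).derivWithin hu
    rw [← h1, derivWithin_congr (h0.mono (Icc_subset_Icc le_rfl ht.2)) (h0 ht)]
    exact congrFun (derivWithin_fun_const (s := _) (c := (0:ℝ))) t

section more
variable {E : Type*} [NormedAddCommGroup E] [NormedSpace ℝ E]

lemma continuous_fderiv_apply {F : E → ℝ} (hF : ContDiff ℝ 1 F) (v : E) :
    Continuous fun q => fderiv ℝ F q v :=
  (ContinuousLinearMap.apply ℝ ℝ v).continuous.comp
    ((hF.fderiv_right (m := 0) (by norm_num)).continuous)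

end more

section vanish
variable {φ : ℝ × ℝ × ℝ → ℝ} {K : Set (ℝ × ℝ)} {U μ : ℝ}

lemma phi_vanish (hK : IsClosed K)
    (hsupp : ∀ t x z : ℝ, (x, z) ∉ K → φ (t, x, z) = 0) {t x z : ℝ} (h : (x, z) ∉ K) :
    φ (t, x, z) = 0 ∧ fderiv ℝ φ (t, x, z) = 0 := by
  refine ⟨hsupp t x z h, ?_⟩
  have hmem : {p : ℝ × ℝ × ℝ | p.2 ∉ K} ∈ nhds (t, x, z) :=
    (hK.isOpen_compl.preimage continuous_snd).mem_nhds h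
  have hEv : φ =ᶠ[nhds ((t, x, z) : ℝ × ℝ × ℝ)] fun _ => (0 : ℝ) :=
    Filter.eventually_of_mem hmem fun p hp => hsupp p.1 p.2.1 p.2.2 hp
  rw [hEv.fderiv_eq]
  exact fderiv_const_apply 0

lemma fE_vanish (hK : IsClosed K)
    (hsupp : ∀ t x z : ℝ, (x, z) ∉ K → φ (t, x, z) = 0) {t x z : ℝ} (h : (x, z) ∉ K) :
    fE U μ φ (t, x, z) = 0 := by
  have h1 := (phi_vanish hK hsupp (t := t) h).1
  have h2 := (phi_vanish hK hsupp (t := t) h).2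
  simp [fE, PsiF, h1, h2]

lemma fFX_vanish (hK : IsClosed K)
    (hsupp : ∀ t x z : ℝ, (x, z) ∉ K → φ (t, x, z) = 0) {t x z : ℝ} (h : (x, z) ∉ K) :
    fFX U μ φ (t, x, z) = 0 := by
  have h2 := (phi_vanish hK hsupp (t := t) h).2
  simp [fFX, fE_vanish (U := U) (μ := μ) hK hsupp h, h2, PsiF]

lemma fQ_vanish (hK : IsClosed K)
    (hsupp : ∀ t x z : ℝ, (x, z) ∉ K → φ (t, x, z) = 0) {t x z : ℝ} (h : (x, z) ∉ K) :
    fQ U φ (t, x, z) = 0 := by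
  have h2 := (phi_vanish hK hsupp (t := t) h).2
  simp [fQ, PsiF, h2]

end vanish


lemma fluid_div_int
    (U μ T R b : ℝ) (hR0 : 0 < R) (hb : b ∈ Icc 0 T)
    (φ : ℝ × ℝ × ℝ → ℝ) (hφ : ContDiff ℝ 2 φ) (K : Set (ℝ × ℝ)) (hK : IsCompact K)
    (hsupp : ∀ t x z : ℝ, (x, z) ∉ K → φ (t, x, z) = 0)
    (hR : ∀ p ∈ K, |p.1| < R ∧ |p.2| < R)
    (hpde : ∀ t ∈ Icc 0 T, ∀ x z : ℝ, 0 < z →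
      fderiv ℝ (PsiF U φ) (t, x, z) (1, 0, 0) + U * fderiv ℝ (PsiF U φ) (t, x, z) (0, 1, 0)
        = fderiv ℝ (fun q => fderiv ℝ φ q (0, 1, 0)) (t, x, z) (0, 1, 0)
          + fderiv ℝ (fun q => fderiv ℝ φ q (0, 0, 1)) (t, x, z) (0, 0, 1) - μ * φ (t, x, z))
    (x : ℝ) :
    (∫ t in (0:ℝ)..b, ∫ z in (0:ℝ)..R, -fderiv ℝ (fFX U μ φ) (t, x, z) (0, 1, 0))
      = ((∫ t in (0:ℝ)..b, fQ U φ (t, x, 0))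
        + ∫ z in (0:ℝ)..R, fE U μ φ (b, x, z)) - ∫ z in (0:ℝ)..R, fE U μ φ (0, x, z) := by
  have hb0 : 0 ≤ b := hb.1
  have hbT : b ≤ T := hb.2
  set J : ℝ × ℝ →L[ℝ] ℝ × ℝ × ℝ := (ContinuousLinearMap.fst ℝ ℝ ℝ).prod
    ((0 : ℝ × ℝ →L[ℝ] ℝ).prod (ContinuousLinearMap.snd ℝ ℝ ℝ)) with hJdef
  have hJ1 : J (1, 0) = ((1 : ℝ), (0 : ℝ), (0 : ℝ)) := by
    simp [hJdef, ContinuousLinearMap.prod_apply]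
  have hJ2 : J (0, 1) = ((0 : ℝ), (0 : ℝ), (1 : ℝ)) := by
    simp [hJdef, ContinuousLinearMap.prod_apply]
  have hBc : Continuous fun v : ℝ × ℝ => ((v.1, x, v.2) : ℝ × ℝ × ℝ) :=
    continuous_fst.prodMk (continuous_const.prodMk continuous_snd)
  have hB : ∀ v : ℝ × ℝ, HasFDerivAt (fun v : ℝ × ℝ => ((v.1, x, v.2) : ℝ × ℝ × ℝ)) J v :=
    fun v => (hasFDerivAt_fst).prodMk ((hasFDerivAt_const x v).prodMk hasFDerivAt_snd)
  have dE3 : Differentiable ℝ (fE U μ φ) := (fE_contDiff hφ).differentiable one_ne_zero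
  have dQ3 : Differentiable ℝ (fQ U φ) := (fQ_contDiff hφ).differentiable one_ne_zero
  have cE3 : Continuous (fE U μ φ) := (fE_contDiff hφ).continuous
  have cQ3 : Continuous (fQ U φ) := (fQ_contDiff hφ).continuous
  have hintg : (fun v : ℝ × ℝ =>
      ((fderiv ℝ (fE U μ φ) (v.1, x, v.2)).comp J) (1, 0)
        + (-((fderiv ℝ (fQ U φ) (v.1, x, v.2)).comp J)) (0, 1))
      = fun v : ℝ × ℝ => fderiv ℝ (fE U μ φ) (v.1, x, v.2) (1, 0, 0)
          - fderiv ℝ (fQ U φ) (v.1, x, v.2) (0, 0, 1) := by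
    funext v
    simp [ContinuousLinearMap.comp_apply, hJ1, hJ2, sub_eq_add_neg]
  have hcont : Continuous fun v : ℝ × ℝ => fderiv ℝ (fE U μ φ) (v.1, x, v.2) (1, 0, 0)
      - fderiv ℝ (fQ U φ) (v.1, x, v.2) (0, 0, 1) :=
    (((continuous_fderiv_apply (fE_contDiff hφ) _).comp hBc).sub
      ((continuous_fderiv_apply (fQ_contDiff hφ) _).comp hBc))
  have div := integral2_divergence_prod_of_hasFDerivAt_off_countable
    (f := fun v : ℝ × ℝ => fE U μ φ (v.1, x, v.2))
    (g := fun v : ℝ × ℝ => -fQ U φ (v.1, x, v.2))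
    (f' := fun v => (fderiv ℝ (fE U μ φ) (v.1, x, v.2)).comp J)
    (g' := fun v => -((fderiv ℝ (fQ U φ) (v.1, x, v.2)).comp J))
    0 0 b R ∅ countable_empty
    ((cE3.comp hBc).continuousOn) ((cQ3.comp hBc).neg.continuousOn)
    (fun v _ => ((dE3 _).hasFDerivAt.comp v (hB v)))
    (fun v _ => (((dQ3 _).hasFDerivAt.comp v (hB v)).neg))
    (by rw [hintg]
        exact hcont.continuousOn.integrableOn_compact (isCompact_uIcc.prod isCompact_uIcc))
  have hL : ∀ t ∈ uIcc (0:ℝ) b,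
      (∫ z in (0:ℝ)..R, (((fderiv ℝ (fE U μ φ) (t, x, z)).comp J) (1, 0)
        + (-((fderiv ℝ (fQ U φ) (t, x, z)).comp J)) (0, 1)))
      = ∫ z in (0:ℝ)..R, -fderiv ℝ (fFX U μ φ) (t, x, z) (0, 1, 0) := by
    intro t ht
    rw [uIcc_of_le hb0] at ht
    rw [intervalIntegral.integral_of_le hR0.le, intervalIntegral.integral_of_le hR0.le]
    refine setIntegral_congr_fun measurableSet_Ioc fun z hz => ?_
    have hpde' := hpde t ⟨ht.1, ht.2.trans hbT⟩ x z hz.1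
    have hdiv := fluid_div hφ (t, x, z) hpde'
    simp only [ContinuousLinearMap.comp_apply, ContinuousLinearMap.neg_apply, hJ1, hJ2]
    linarith
  have hgR : (∫ t in (0:ℝ)..b, -fQ U φ (t, x, R)) = 0 := by
    have heq : EqOn (fun t : ℝ => -fQ U φ (t, x, R)) (fun _ => (0:ℝ)) (uIcc 0 b) := by
      intro t _
      have hnot : ((x, R) : ℝ × ℝ) ∉ K := fun hmem => by
        have := (hR _ hmem).2
        simp only [abs_of_pos hR0] at this
        exact lt_irrefl _ this
      simp [fQ_vanish hK.isClosed hsupp hnot]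
    rw [intervalIntegral.integral_congr heq]
    simp
  calc (∫ t in (0:ℝ)..b, ∫ z in (0:ℝ)..R, -fderiv ℝ (fFX U μ φ) (t, x, z) (0, 1, 0))
      = ∫ t in (0:ℝ)..b, ∫ z in (0:ℝ)..R, (((fderiv ℝ (fE U μ φ) (t, x, z)).comp J) (1, 0)
          + (-((fderiv ℝ (fQ U φ) (t, x, z)).comp J)) (0, 1)) :=
        intervalIntegral.integral_congr fun t ht => (hL t ht).symm
    _ = (((∫ t in (0:ℝ)..b, -fQ U φ (t, x, R)) - ∫ t in (0:ℝ)..b, -fQ U φ (t, x, 0))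
          + ∫ z in (0:ℝ)..R, fE U μ φ (b, x, z)) - ∫ z in (0:ℝ)..R, fE U μ φ (0, x, z) := div
    _ = ((∫ t in (0:ℝ)..b, fQ U φ (t, x, 0))
          + ∫ z in (0:ℝ)..R, fE U μ φ (b, x, z)) - ∫ z in (0:ℝ)..R, fE U μ φ (0, x, z) := by
        rw [hgR, intervalIntegral.integral_neg]
        ring



lemma fluid_energy
    (U μ T R b : ℝ) (hR0 : 0 < R) (hb : b ∈ Icc 0 T)
    (φ : ℝ × ℝ × ℝ → ℝ) (hφ : ContDiff ℝ 2 φ) (K : Set (ℝ × ℝ)) (hK : IsCompact K)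
    (hsupp : ∀ t x z : ℝ, (x, z) ∉ K → φ (t, x, z) = 0)
    (hR : ∀ p ∈ K, |p.1| < R ∧ |p.2| < R)
    (hpde : ∀ t ∈ Icc 0 T, ∀ x z : ℝ, 0 < z →
      fderiv ℝ (PsiF U φ) (t, x, z) (1, 0, 0) + U * fderiv ℝ (PsiF U φ) (t, x, z) (0, 1, 0)
        = fderiv ℝ (fun q => fderiv ℝ φ q (0, 1, 0)) (t, x, z) (0, 1, 0)
          + fderiv ℝ (fun q => fderiv ℝ φ q (0, 0, 1)) (t, x, z) (0, 0, 1) - μ * φ (t, x, z)) :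
    (∫ q in upperHalfPlane2, fE U μ φ (b, q.1, q.2))
      - (∫ q in upperHalfPlane2, fE U μ φ (0, q.1, q.2))
      = - ∫ t in (0:ℝ)..b, ∫ x in (-R)..R, fQ U φ (t, x, 0) := by
  have hb0 : 0 ≤ b := hb.1
  have hRR : -R ≤ R := by linarith
  have cE3 : Continuous (fE U μ φ) := (fE_contDiff hφ).continuous
  have cQ3 : Continuous (fQ U φ) := (fQ_contDiff hφ).continuous
  have hnotK : ∀ x z : ℝ, ¬ (|x| < R ∧ |z| < R) → ((x, z) : ℝ × ℝ) ∉ K :=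
    fun x z h hmem => h (hR _ hmem)
  -- Step A: half-plane integral as iterated interval integrals
  have hhp : ∀ s : ℝ, (∫ q in upperHalfPlane2, fE U μ φ (s, q.1, q.2))
      = ∫ x in (-R)..R, ∫ z in (0:ℝ)..R, fE U μ φ (s, x, z) := by
    intro s
    have hρc : Continuous fun q : ℝ × ℝ => fE U μ φ (s, q.1, q.2) :=
      cE3.comp (continuous_const.prodMk (continuous_fst.prodMk continuous_snd))
    have hUm : MeasurableSet upperHalfPlane2 :=
      measurableSet_lt measurable_const measurable_snd
    have hSm : MeasurableSet (Ioc (-R) R ×ˢ Ioc (0:ℝ) R) :=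
      measurableSet_Ioc.prod measurableSet_Ioc
    have hind : Set.indicator upperHalfPlane2 (fun q : ℝ × ℝ => fE U μ φ (s, q.1, q.2))
        = Set.indicator (Ioc (-R) R ×ˢ Ioc (0:ℝ) R)
            (fun q : ℝ × ℝ => fE U μ φ (s, q.1, q.2)) := by
      funext q
      by_cases hq : q ∈ Ioc (-R) R ×ˢ Ioc (0:ℝ) R
      · rw [indicator_of_mem hq, indicator_of_mem]
        exact hq.2.1
      · rw [indicator_of_notMem hq]
        by_cases hu : q ∈ upperHalfPlane2
        · rw [indicator_of_mem hu]
          have hnot : ((q.1, q.2) : ℝ × ℝ) ∉ K := by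
            refine hnotK _ _ fun hab => hq ⟨?_, ?_⟩
            · exact ⟨(abs_lt.mp hab.1).1, (abs_lt.mp hab.1).2.le⟩
            · exact ⟨hu, (abs_lt.mp hab.2).2.le⟩
          exact fE_vanish hK.isClosed hsupp hnot
        · rw [indicator_of_notMem hu]
    have hInt : IntegrableOn (fun q : ℝ × ℝ => fE U μ φ (s, q.1, q.2))
        (Ioc (-R) R ×ˢ Ioc (0:ℝ) R) volume :=
      (hρc.continuousOn.integrableOn_compact (isCompact_Icc.prod isCompact_Icc)).mono_set
        (prod_mono Ioc_subset_Icc_self Ioc_subset_Icc_self)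
    calc (∫ q in upperHalfPlane2, fE U μ φ (s, q.1, q.2))
        = ∫ q, Set.indicator upperHalfPlane2 (fun q : ℝ × ℝ => fE U μ φ (s, q.1, q.2)) q :=
          (MeasureTheory.integral_indicator hUm).symm
      _ = ∫ q, Set.indicator (Ioc (-R) R ×ˢ Ioc (0:ℝ) R)
            (fun q : ℝ × ℝ => fE U μ φ (s, q.1, q.2)) q := by rw [hind]
      _ = ∫ q in Ioc (-R) R ×ˢ Ioc (0:ℝ) R, fE U μ φ (s, q.1, q.2) := MeasureTheory.integral_indicator hSm
      _ = ∫ x in Ioc (-R) R, ∫ z in Ioc (0:ℝ) R, fE U μ φ (s, x, z) := by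
          rw [Measure.volume_eq_prod] at hInt ⊢
          exact setIntegral_prod _ hInt
      _ = ∫ x in (-R)..R, ∫ z in (0:ℝ)..R, fE U μ φ (s, x, z) := by
          rw [intervalIntegral.integral_of_le hRR]
          refine setIntegral_congr_fun measurableSet_Ioc fun x _ => ?_
          rw [intervalIntegral.integral_of_le hR0.le]
  -- Step B: per-x divergence identity
  have key := fluid_div_int U μ T R b hR0 hb φ hφ K hK hsupp hR hpde
  -- Step C: the x-integral of the divergence term vanishes
  have hdxc : Continuous fun p : ℝ × ℝ × ℝ => -fderiv ℝ (fFX U μ φ) p (0, 1, 0) :=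
    (continuous_fderiv_apply (fFX_contDiff hφ) _).neg
  have hzero : (∫ x in (-R)..R, ∫ t in (0:ℝ)..b,
      ∫ z in (0:ℝ)..R, -fderiv ℝ (fFX U μ φ) (t, x, z) (0, 1, 0)) = 0 := by
    have hsw1 : (∫ x in (-R)..R, ∫ t in (0:ℝ)..b,
        ∫ z in (0:ℝ)..R, -fderiv ℝ (fFX U μ φ) (t, x, z) (0, 1, 0))
        = ∫ t in (0:ℝ)..b, ∫ x in (-R)..R,
            ∫ z in (0:ℝ)..R, -fderiv ℝ (fFX U μ φ) (t, x, z) (0, 1, 0) := by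
      refine swapII ?_ hRR hb0
      have : Continuous fun q : ℝ × ℝ => ∫ z in (0:ℝ)..R,
          -fderiv ℝ (fFX U μ φ) (q.2, q.1, z) (0, 1, 0) := by
        refine continuous_parametric_intervalIntegral_of_continuous' ?_ _ _
        exact hdxc.comp ((continuous_snd.comp continuous_fst).prodMk
          (((continuous_fst.comp continuous_fst)).prodMk continuous_snd))
      exact this
    rw [hsw1]
    have houter : ∀ t ∈ uIcc (0:ℝ) b, (∫ x in (-R)..R,
        ∫ z in (0:ℝ)..R, -fderiv ℝ (fFX U μ φ) (t, x, z) (0, 1, 0)) = 0 := by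
      intro t _
      have hsw2 : (∫ x in (-R)..R, ∫ z in (0:ℝ)..R,
          -fderiv ℝ (fFX U μ φ) (t, x, z) (0, 1, 0))
          = ∫ z in (0:ℝ)..R, ∫ x in (-R)..R,
              -fderiv ℝ (fFX U μ φ) (t, x, z) (0, 1, 0) := by
        refine swapII ?_ hRR hR0.le
        exact hdxc.comp (continuous_const.prodMk (continuous_fst.prodMk continuous_snd))
      rw [hsw2]
      have hinner : ∀ z ∈ uIcc (0:ℝ) R, (∫ x in (-R)..R,
          -fderiv ℝ (fFX U μ φ) (t, x, z) (0, 1, 0)) = 0 := by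
        intro z _
        have hftc : (∫ x in (-R)..R, fderiv ℝ (fFX U μ φ) (t, x, z) (0, 1, 0))
            = fFX U μ φ (t, R, z) - fFX U μ φ (t, -R, z) := by
          refine intervalIntegral.integral_eq_sub_of_hasDerivAt (f := fun x => fFX U μ φ (t, x, z)) (fun x _ => ?_) ?_
          · exact hasDerivAt_sliceX (fFX U μ φ) (((fFX_contDiff hφ).differentiable one_ne_zero) _)
          · exact ((continuous_fderiv_apply (fFX_contDiff hφ) _).comp
              (continuous_const.prodMk (continuous_id.prodMk continuous_const))).intervalIntegrable _ _
        have h1 : fFX U μ φ (t, R, z) = 0 :=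
          fFX_vanish hK.isClosed hsupp (hnotK _ _ fun hab => lt_irrefl R
            (by simpa [abs_of_pos hR0] using hab.1))
        have h2 : fFX U μ φ (t, -R, z) = 0 :=
          fFX_vanish hK.isClosed hsupp (hnotK _ _ fun hab => lt_irrefl R
            (by simpa [abs_of_pos hR0] using hab.1))
        rw [intervalIntegral.integral_neg, hftc, h1, h2]
        ring
      rw [intervalIntegral.integral_congr hinner]
      simp
    rw [intervalIntegral.integral_congr houter]
    simp
  -- Step D: split and conclude
  have hcQ0 : Continuous fun q : ℝ × ℝ => fQ U φ (q.2, q.1, 0) :=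
    cQ3.comp (continuous_snd.prodMk (continuous_fst.prodMk continuous_const))
  have hiQ : IntervalIntegrable (fun x => ∫ t in (0:ℝ)..b, fQ U φ (t, x, 0)) volume (-R) R :=
    (continuous_parametric_intervalIntegral_of_continuous'
      (f := fun x t => fQ U φ (t, x, 0)) hcQ0 0 b).intervalIntegrable _ _
  have hiEb : ∀ s : ℝ, IntervalIntegrable (fun x => ∫ z in (0:ℝ)..R, fE U μ φ (s, x, z))
      volume (-R) R := fun s =>
    (continuous_parametric_intervalIntegral_of_continuous'
      (f := fun x z => fE U μ φ (s, x, z))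
      (cE3.comp (continuous_const.prodMk (continuous_fst.prodMk continuous_snd))) 0 R
      ).intervalIntegrable _ _
  have hsplit : (∫ x in (-R)..R, ∫ t in (0:ℝ)..b,
      ∫ z in (0:ℝ)..R, -fderiv ℝ (fFX U μ φ) (t, x, z) (0, 1, 0))
      = ((∫ x in (-R)..R, ∫ t in (0:ℝ)..b, fQ U φ (t, x, 0))
        + ∫ x in (-R)..R, ∫ z in (0:ℝ)..R, fE U μ φ (b, x, z))
        - ∫ x in (-R)..R, ∫ z in (0:ℝ)..R, fE U μ φ (0, x, z) := by
    rw [intervalIntegral.integral_congr (fun x _ => key x)]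
    rw [intervalIntegral.integral_sub (hiQ.add (hiEb b)) (hiEb 0),
      intervalIntegral.integral_add hiQ (hiEb b)]
  have hswQ : (∫ x in (-R)..R, ∫ t in (0:ℝ)..b, fQ U φ (t, x, 0))
      = ∫ t in (0:ℝ)..b, ∫ x in (-R)..R, fQ U φ (t, x, 0) :=
    swapII (f := fun x t => fQ U φ (t, x, 0)) hcQ0 hRR hb0
  rw [hhp b, hhp 0]
  linarith [hzero, hsplit, hswQ]


lemma beam_energy
    (D L T b : ℝ) (hL : 0 < L) (hT : 0 < T) (hb : b ∈ Icc 0 T)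
    (w : ℝ → ℝ → ℝ) (hw : ContDiff ℝ (⊤ : ℕ∞) (Wf w)) (ψ0 : ℝ → ℝ → ℝ)
    (hbeam' : ∀ x ∈ Ioo 0 L, ∀ t ∈ Ioo 0 T, WTT w (x, t) + D * W4 w (x, t) = ψ0 t x)
    (hcl1 : ∀ t ∈ Icc 0 T, w 0 t = 0) (hcl2 : ∀ t ∈ Icc 0 T, dX w 0 t = 0)
    (hfr : ∀ t ∈ Icc 0 T, W2 w (L, t) = 0 ∧ W3 w (L, t) = 0) :
    (∫ x in (0:ℝ)..L, bE D w (x, b)) - (∫ x in (0:ℝ)..L, bE D w (x, 0))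
      = ∫ t in (0:ℝ)..b, ∫ x in (0:ℝ)..L, 2 * WT w (x, t) * ψ0 t x := by
  have hb0 : 0 ≤ b := hb.1
  have hbT : b ≤ T := hb.2
  have hdw : Differentiable ℝ (Wf w) := hw.differentiable (by simp)
  -- clamped boundary consequences
  have hWT0 : ∀ t ∈ Icc 0 T, WT w (0, t) = 0 := by
    intro t ht
    have hd : DifferentiableAt ℝ (fun s => w 0 s) t :=
      (hasDerivAt_slice2 (Wf w) (hdw (0, t))).differentiableAt
    have h0 : EqOn (fun s => w 0 s) 0 (Icc 0 T) := fun s hs => hcl1 s hs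
    have := deriv_zero_of_vanish hd hT ht h0
    rw [← cWT hw 0 t]
    exact this
  have hWT10 : ∀ t ∈ Icc 0 T, WT1 w (0, t) = 0 := by
    intro t ht
    have heq : (fun s => dX w 0 s) = fun s => W1 w (0, s) := funext fun s => cW1 hw 0 s
    have hd : DifferentiableAt ℝ (fun s => W1 w (0, s)) t :=
      (hasDerivAt_slice2 (W1 w) (((W1_smooth hw).differentiable (by simp)) (0, t))).differentiableAt
    have h0 : EqOn (fun s => W1 w (0, s)) 0 (Icc 0 T) := fun s hs => by
      have := hcl2 s hs
      rw [cW1 hw 0 s] at this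
      exact this
    have hder := deriv_zero_of_vanish hd hT ht h0
    rw [← cWT1 hw 0 t]
    show deriv (fun s => dX w 0 s) t = 0
    rw [heq]
    exact hder
  set J : ℝ × ℝ →L[ℝ] ℝ × ℝ := (ContinuousLinearMap.snd ℝ ℝ ℝ).prod
    (ContinuousLinearMap.fst ℝ ℝ ℝ) with hJdef
  have hJ1 : J (1, 0) = ((0 : ℝ), (1 : ℝ)) := by simp [hJdef]
  have hJ2 : J (0, 1) = ((1 : ℝ), (0 : ℝ)) := by simp [hJdef]
  have hBc : Continuous fun v : ℝ × ℝ => ((v.2, v.1) : ℝ × ℝ) :=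
    continuous_snd.prodMk continuous_fst
  have hB : ∀ v : ℝ × ℝ, HasFDerivAt (fun v : ℝ × ℝ => ((v.2, v.1) : ℝ × ℝ)) J v :=
    fun v => hasFDerivAt_snd.prodMk hasFDerivAt_fst
  have hbE1 : ContDiff ℝ 1 (bE D w) := (bE_smooth hw).of_le (by simp)
  have hbG1 : ContDiff ℝ 1 (bG D w) := (bG_smooth hw).of_le (by simp)
  have dbE : Differentiable ℝ (bE D w) := hbE1.differentiable one_ne_zero
  have dbG : Differentiable ℝ (bG D w) := hbG1.differentiable one_ne_zero
  have hcont : Continuous fun v : ℝ × ℝ => fderiv ℝ (bE D w) (v.2, v.1) (0, 1)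
      + fderiv ℝ (bG D w) (v.2, v.1) (1, 0) :=
    ((continuous_fderiv_apply hbE1 _).comp hBc).add ((continuous_fderiv_apply hbG1 _).comp hBc)
  have div := integral2_divergence_prod_of_hasFDerivAt_off_countable
    (f := fun v : ℝ × ℝ => bE D w (v.2, v.1))
    (g := fun v : ℝ × ℝ => bG D w (v.2, v.1))
    (f' := fun v => (fderiv ℝ (bE D w) (v.2, v.1)).comp J)
    (g' := fun v => (fderiv ℝ (bG D w) (v.2, v.1)).comp J)
    0 0 b L ∅ countable_empty
    ((hbE1.continuous.comp hBc).continuousOn) ((hbG1.continuous.comp hBc).continuousOn)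
    (fun v _ => ((dbE _).hasFDerivAt.comp v (hB v)))
    (fun v _ => ((dbG _).hasFDerivAt.comp v (hB v)))
    (by
      have hfun : (fun v : ℝ × ℝ =>
          ((fderiv ℝ (bE D w) (v.2, v.1)).comp J) (1, 0)
            + ((fderiv ℝ (bG D w) (v.2, v.1)).comp J) (0, 1))
          = fun v : ℝ × ℝ => fderiv ℝ (bE D w) (v.2, v.1) (0, 1)
              + fderiv ℝ (bG D w) (v.2, v.1) (1, 0) := by
        funext v
        simp [ContinuousLinearMap.comp_apply, hJ1, hJ2]
      rw [hfun]
      exact hcont.continuousOn.integrableOn_compact (isCompact_uIcc.prod isCompact_uIcc))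
  have hgL : (∫ t in (0:ℝ)..b, bG D w (L, t)) = 0 := by
    have heq : EqOn (fun t : ℝ => bG D w (L, t)) (fun _ => (0:ℝ)) (uIcc 0 b) := by
      intro t ht
      rw [uIcc_of_le hb0] at ht
      have h1 := (hfr t ⟨ht.1, ht.2.trans hbT⟩).1
      have h2 := (hfr t ⟨ht.1, ht.2.trans hbT⟩).2
      simp [bG, h1, h2]
    rw [intervalIntegral.integral_congr heq]; simp
  have hg0 : (∫ t in (0:ℝ)..b, bG D w (0, t)) = 0 := by
    have heq : EqOn (fun t : ℝ => bG D w (0, t)) (fun _ => (0:ℝ)) (uIcc 0 b) := by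
      intro t ht
      rw [uIcc_of_le hb0] at ht
      have h1 := hWT0 t ⟨ht.1, ht.2.trans hbT⟩
      have h2 := hWT10 t ⟨ht.1, ht.2.trans hbT⟩
      simp [bG, h1, h2]
    rw [intervalIntegral.integral_congr heq]; simp
  have hLHS : (∫ t in (0:ℝ)..b, ∫ x in (0:ℝ)..L,
      (((fderiv ℝ (bE D w) ((t, x).2, (t, x).1)).comp J) (1, 0)
        + ((fderiv ℝ (bG D w) ((t, x).2, (t, x).1)).comp J) (0, 1)))
      = ∫ t in (0:ℝ)..b, ∫ x in (0:ℝ)..L, 2 * WT w (x, t) * ψ0 t x := by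
    rw [intervalIntegral.integral_of_le hb0, intervalIntegral.integral_of_le hb0]
    refine setIntegral_congr_ae measurableSet_Ioc ?_
    have haeT : ∀ᵐ t : ℝ, t ≠ T := by
      refine compl_mem_ae_iff.mpr ?_
      exact Real.volume_singleton
    filter_upwards [haeT] with t htT htmem
    rw [intervalIntegral.integral_of_le hL.le, intervalIntegral.integral_of_le hL.le]
    refine setIntegral_congr_ae measurableSet_Ioc ?_
    have haeL : ∀ᵐ x : ℝ, x ≠ L := by
      refine compl_mem_ae_iff.mpr ?_
      exact Real.volume_singleton
    filter_upwards [haeL] with x hxL hxmem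
    have ht' : t ∈ Ioo 0 T := ⟨htmem.1, lt_of_le_of_ne (htmem.2.trans hbT) htT⟩
    have hx' : x ∈ Ioo 0 L := ⟨hxmem.1, lt_of_le_of_ne hxmem.2 hxL⟩
    have hq := beam_div (D := D) hw (x, t)
    rw [hbeam' x hx' t ht'] at hq
    simp only [ContinuousLinearMap.comp_apply, hJ1, hJ2]
    linarith
  calc (∫ x in (0:ℝ)..L, bE D w (x, b)) - (∫ x in (0:ℝ)..L, bE D w (x, 0))
      = (((∫ t in (0:ℝ)..b, bG D w (L, t)) - ∫ t in (0:ℝ)..b, bG D w (0, t))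
          + ∫ x in (0:ℝ)..L, bE D w (x, b)) - ∫ x in (0:ℝ)..L, bE D w (x, 0) := by
        rw [hgL, hg0]; ring
    _ = ∫ t in (0:ℝ)..b, ∫ x in (0:ℝ)..L,
          (((fderiv ℝ (bE D w) ((t, x).2, (t, x).1)).comp J) (1, 0)
            + ((fderiv ℝ (bG D w) ((t, x).2, (t, x).1)).comp J) (0, 1)) := div.symm
    _ = ∫ t in (0:ℝ)..b, ∫ x in (0:ℝ)..L, 2 * WT w (x, t) * ψ0 t x := hLHS

lemma left_lim_zero {F : ℝ → ℝ} (hF : Continuous F) {c : ℝ} (h0 : ∀ y, y < c → F y = 0) :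
    F c = 0 := by
  have h1 : Filter.Tendsto F (nhdsWithin c (Iio c)) (nhds (F c)) :=
    (hF.tendsto c).mono_left nhdsWithin_le_nhds
  have h2 : Filter.Tendsto F (nhdsWithin c (Iio c)) (nhds 0) := by
    refine Filter.Tendsto.congr' ?_ tendsto_const_nhds
    filter_upwards [self_mem_nhdsWithin] with y hy
    exact (h0 y hy).symm
  exact tendsto_nhds_unique h1 h2

lemma right_lim_zero {F : ℝ → ℝ} (hF : Continuous F) {c : ℝ} (h0 : ∀ y, c < y → F y = 0) :
    F c = 0 := by
  have h1 : Filter.Tendsto F (nhdsWithin c (Ioi c)) (nhds (F c)) :=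
    (hF.tendsto c).mono_left nhdsWithin_le_nhds
  have h2 : Filter.Tendsto F (nhdsWithin c (Ioi c)) (nhds 0) := by
    refine Filter.Tendsto.congr' ?_ tendsto_const_nhds
    filter_upwards [self_mem_nhdsWithin] with y hy
    exact (h0 y hy).symm
  exact tendsto_nhds_unique h1 h2

/-- Energy balance for the linearized subsonic flow–cantilever system with
Kutta–Joukowsky flow conditions: with `ψ = ∂_tφ + U∂ₓφ`, the convected wave equation on
the half-plane, the clamped–free beam equation `w_tt + D∂ₓ⁴w = ψ|_{z=0}` on `(0,L)`,
the impermeability condition `∂_zφ|_{z=0} = w_t + Uwₓ` on `(0,L)` and the Kutta–Joukowsky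
condition `ψ|_{z=0} = 0` off `[0,L]`, the total energy satisfies
`ℰ(t) + U ∫₀^t ∫₀^L wₓ ψ(·,·,0) dx dτ = ℰ(0)` for every `t ∈ [0,T]`. -/
theorem statement11
    (U μ D L T : ℝ) (hμ : 0 ≤ μ) (hD : 0 < D) (hL : 0 < L) (hT : 0 < T)
    (φ : ℝ × ℝ × ℝ → ℝ) (hφ : ContDiff ℝ 2 φ)
    (K : Set (ℝ × ℝ)) (hK : IsCompact K)
    (hsupp : ∀ t x z : ℝ, (x, z) ∉ K → φ (t, x, z) = 0)
    (ψ : ℝ × ℝ × ℝ → ℝ) (hψ : ∀ p, ψ p = pT φ p + U * pX3 φ p)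
    (hPDE : ∀ t ∈ Icc (0:ℝ) T, ∀ x : ℝ, ∀ z : ℝ, 0 < z →
      pT ψ (t, x, z) + U * pX3 ψ (t, x, z)
        = pX3 (pX3 φ) (t, x, z) + pZ3 (pZ3 φ) (t, x, z) - μ * φ (t, x, z))
    (w : ℝ → ℝ → ℝ) (hw : ContDiff ℝ (⊤ : ℕ∞) fun q : ℝ × ℝ => w q.1 q.2)
    (hclamped : ∀ t ∈ Icc (0:ℝ) T, w 0 t = 0 ∧ dX w 0 t = 0)
    (hfree : ∀ t ∈ Icc (0:ℝ) T, dX (dX w) L t = 0 ∧ dX (dX (dX w)) L t = 0)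
    (hbeam : ∀ x ∈ Ioo (0:ℝ) L, ∀ t ∈ Ioo (0:ℝ) T,
      dT (dT w) x t + D * dX (dX (dX (dX w))) x t = ψ (t, x, 0))
    (himperm : ∀ t ∈ Icc (0:ℝ) T, ∀ x ∈ Ioo (0:ℝ) L,
      pZ3 φ (t, x, 0) = dT w x t + U * dX w x t)
    (hKJC : ∀ t ∈ Icc (0:ℝ) T, ∀ x : ℝ, x ∉ Icc (0:ℝ) L → ψ (t, x, 0) = 0)
    (ℰ : ℝ → ℝ)
    (hℰ : ∀ t : ℝ, ℰ t
      = (1 / 2) * (∫ x in (0:ℝ)..L, ((dT w x t) ^ 2 + D * (dX (dX w) x t) ^ 2))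
        + (1 / 2) * ∫ q in upperHalfPlane2,
            ((ψ (t, q.1, q.2)) ^ 2 + (pX3 φ (t, q.1, q.2)) ^ 2
              + (pZ3 φ (t, q.1, q.2)) ^ 2 + μ * (φ (t, q.1, q.2)) ^ 2)) :
    ∀ t ∈ Icc (0:ℝ) T,
      ℰ t + U * (∫ τ in (0:ℝ)..t, ∫ x in (0:ℝ)..L, dX w x τ * ψ (τ, x, 0)) = ℰ 0 := by
  intro b hb
  have hb0 : 0 ≤ b := hb.1
  have hw2 : ContDiff ℝ (⊤ : ℕ∞) (Wf w) := hw
  have hφd : Differentiable ℝ φ := hφ.differentiable two_ne_zero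
  have hψfun : ψ = PsiF U φ := by
    funext p
    obtain ⟨pt, px, pz⟩ := p
    rw [hψ, pT_eq φ hφd, pX3_eq φ hφd]
    rfl
  have hgX : pX3 φ = fun p => fderiv ℝ φ p (0, 1, 0) := by
    funext p; obtain ⟨pt, px, pz⟩ := p; exact pX3_eq φ hφd pt px pz
  have hgZ : pZ3 φ = fun p => fderiv ℝ φ p (0, 0, 1) := by
    funext p; obtain ⟨pt, px, pz⟩ := p; exact pZ3_eq φ hφd pt px pz
  have dΨ : Differentiable ℝ (PsiF U φ) := (PsiF_contDiff hφ).differentiable one_ne_zero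
  have cΨ : Continuous (PsiF U φ) := (PsiF_contDiff hφ).continuous
  have dgX : Differentiable ℝ (fun q => fderiv ℝ φ q ((0:ℝ), (1:ℝ), (0:ℝ))) :=
    (contDiff_one_fderiv_apply hφ _).differentiable one_ne_zero
  have dgZ : Differentiable ℝ (fun q => fderiv ℝ φ q ((0:ℝ), (0:ℝ), (1:ℝ))) :=
    (contDiff_one_fderiv_apply hφ _).differentiable one_ne_zero
  have hpde' : ∀ τ ∈ Icc (0:ℝ) T, ∀ x z : ℝ, 0 < z →
      fderiv ℝ (PsiF U φ) (τ, x, z) (1, 0, 0) + U * fderiv ℝ (PsiF U φ) (τ, x, z) (0, 1, 0)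
        = fderiv ℝ (fun q => fderiv ℝ φ q (0, 1, 0)) (τ, x, z) (0, 1, 0)
          + fderiv ℝ (fun q => fderiv ℝ φ q (0, 0, 1)) (τ, x, z) (0, 0, 1) - μ * φ (τ, x, z) := by
    intro τ hτ x z hz
    have h := hPDE τ hτ x z hz
    rw [hψfun, hgX, hgZ] at h
    rw [pT_eq _ dΨ, pX3_eq _ dΨ, pX3_eq _ dgX, pZ3_eq _ dgZ] at h
    exact h
  have hbeam' : ∀ x ∈ Ioo (0:ℝ) L, ∀ τ ∈ Ioo (0:ℝ) T,
      WTT w (x, τ) + D * W4 w (x, τ) = PsiF U φ (τ, x, 0) := by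
    intro x hx τ hτ
    have h := hbeam x hx τ hτ
    rw [cWTT hw2, cW4 hw2, hψfun] at h
    exact h
  have hcl1 : ∀ τ ∈ Icc (0:ℝ) T, w 0 τ = 0 := fun τ hτ => (hclamped τ hτ).1
  have hcl2 : ∀ τ ∈ Icc (0:ℝ) T, dX w 0 τ = 0 := fun τ hτ => (hclamped τ hτ).2
  have hfr' : ∀ τ ∈ Icc (0:ℝ) T, W2 w (L, τ) = 0 ∧ W3 w (L, τ) = 0 := by
    intro τ hτ
    refine ⟨?_, ?_⟩
    · rw [← cW2 hw2]; exact (hfree τ hτ).1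
    · rw [← cW3 hw2]; exact (hfree τ hτ).2
  -- choose R
  obtain ⟨r, hr⟩ := hK.isBounded.subset_closedBall (0 : ℝ × ℝ)
  set R : ℝ := max (r + 1) (L + 1) with hRdef
  have hR0 : 0 < R := lt_of_lt_of_le (by linarith) (le_max_right _ _)
  have hLR : L < R := lt_of_lt_of_le (by linarith) (le_max_right _ _)
  have hRprop : ∀ p ∈ K, |p.1| < R ∧ |p.2| < R := by
    intro p hp
    have hn : ‖p‖ ≤ r := by simpa using hr hp
    have h1 : ‖p.1‖ ≤ r := le_trans (norm_fst_le p) hn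
    have h2 : ‖p.2‖ ≤ r := le_trans (norm_snd_le p) hn
    have hrR : r + 1 ≤ R := le_max_left _ _
    rw [Real.norm_eq_abs] at h1 h2
    exact ⟨by linarith, by linarith⟩
  have fluidEq := fluid_energy U μ T R b hR0 hb φ hφ K hK hsupp hRprop hpde'
  have beamEq := beam_energy D L T b hL hT hb w hw2 (fun τ x => PsiF U φ (τ, x, 0))
    hbeam' hcl1 hcl2 hfr'
  -- Kutta-Joukowsky reduction
  have hψ0 : ∀ τ ∈ Icc (0:ℝ) T, ∀ x : ℝ, x ∉ Ioo (0:ℝ) L → PsiF U φ (τ, x, 0) = 0 := by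
    intro τ hτ x hx
    have hout : ∀ y : ℝ, y ∉ Icc (0:ℝ) L → PsiF U φ (τ, y, 0) = 0 := by
      intro y hy
      have h := hKJC τ hτ y hy
      rw [hψfun] at h
      exact h
    have hFc : Continuous fun y : ℝ => PsiF U φ (τ, y, 0) :=
      cΨ.comp (continuous_const.prodMk (continuous_id.prodMk continuous_const))
    rcases lt_trichotomy x 0 with h | h | h
    · exact hout x (by simp [mem_Icc]; intro; linarith)
    · subst h
      exact left_lim_zero hFc fun y hy => hout y (by simp [mem_Icc]; intro; linarith)
    · rcases lt_trichotomy x L with h2 | h2 | h2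
      · exact absurd ⟨h, h2⟩ hx
      · subst h2
        exact right_lim_zero hFc fun y hy => hout y (by simp [mem_Icc]; intro h3; linarith)
      · exact hout x (by simp [mem_Icc]; intro; linarith)
  have cfQ0 : Continuous fun q : ℝ × ℝ => fQ U φ (q.1, q.2, 0) :=
    (fQ_contDiff hφ).continuous.comp
      (continuous_fst.prodMk (continuous_snd.prodMk continuous_const))
  have hKJ' : ∀ τ ∈ Icc (0:ℝ) T, (∫ x in (-R)..R, fQ U φ (τ, x, 0))
      = ∫ x in (0:ℝ)..L, (2 * WT w (x, τ) * PsiF U φ (τ, x, 0)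
          + 2 * U * (W1 w (x, τ) * PsiF U φ (τ, x, 0))) := by
    intro τ hτ
    have hint : ∀ a c : ℝ, IntervalIntegrable (fun x => fQ U φ (τ, x, 0)) volume a c :=
      fun a c => ((fQ_contDiff hφ).continuous.comp
        (continuous_const.prodMk (continuous_id.prodMk continuous_const))).intervalIntegrable a c
    have hadj1 : (∫ x in (-R)..(0:ℝ), fQ U φ (τ, x, 0)) + (∫ x in (0:ℝ)..L, fQ U φ (τ, x, 0))
        = ∫ x in (-R)..L, fQ U φ (τ, x, 0) :=
      intervalIntegral.integral_add_adjacent_intervals (hint _ _) (hint _ _)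
    have hadj2 : (∫ x in (-R)..L, fQ U φ (τ, x, 0)) + (∫ x in L..R, fQ U φ (τ, x, 0))
        = ∫ x in (-R)..R, fQ U φ (τ, x, 0) :=
      intervalIntegral.integral_add_adjacent_intervals (hint _ _) (hint _ _)
    have hzero1 : (∫ x in (-R)..(0:ℝ), fQ U φ (τ, x, 0)) = 0 := by
      have heq : EqOn (fun x : ℝ => fQ U φ (τ, x, 0)) (fun _ => (0:ℝ)) (uIcc (-R) 0) := by
        intro x hxm
        rw [uIcc_of_le (by linarith)] at hxm
        have h0 : PsiF U φ (τ, x, 0) = 0 :=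
          hψ0 τ hτ x (by simp [mem_Ioo]; intro h; linarith [hxm.2])
        simp [fQ, h0]
      rw [intervalIntegral.integral_congr heq]; simp
    have hzero2 : (∫ x in L..R, fQ U φ (τ, x, 0)) = 0 := by
      have heq : EqOn (fun x : ℝ => fQ U φ (τ, x, 0)) (fun _ => (0:ℝ)) (uIcc L R) := by
        intro x hxm
        rw [uIcc_of_le hLR.le] at hxm
        have h0 : PsiF U φ (τ, x, 0) = 0 :=
          hψ0 τ hτ x (by simp [mem_Ioo]; intro h; linarith [hxm.1])
        simp [fQ, h0]
      rw [intervalIntegral.integral_congr heq]; simp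
    have hmid : (∫ x in (0:ℝ)..L, fQ U φ (τ, x, 0))
        = ∫ x in (0:ℝ)..L, (2 * WT w (x, τ) * PsiF U φ (τ, x, 0)
            + 2 * U * (W1 w (x, τ) * PsiF U φ (τ, x, 0))) := by
      refine intervalIntegral.integral_congr fun x hxm => ?_
      rw [uIcc_of_le hL.le] at hxm
      rcases lt_trichotomy x 0 with h | h | h
      · exact absurd hxm.1 (not_le.mpr h)
      · have h0 : PsiF U φ (τ, x, 0) = 0 := hψ0 τ hτ x (by subst h; simp)
        simp [fQ, h0]
      · rcases lt_trichotomy x L with h2 | h2 | h2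
        · -- interior: use impermeability
          have himp2 : fderiv ℝ φ (τ, x, 0) (0, 0, 1) = WT w (x, τ) + U * W1 w (x, τ) := by
            have hh := himperm τ hτ x ⟨h, h2⟩
            rw [cWT hw2, cW1 hw2] at hh
            rw [← pZ3_eq φ hφd τ x 0]
            exact hh
          show fQ U φ (τ, x, 0) = _
          simp only [fQ, himp2]
          ring
        · have h0 : PsiF U φ (τ, x, 0) = 0 := hψ0 τ hτ x (by subst h2; simp)
          simp [fQ, h0]
        · exact absurd hxm.2 (not_le.mpr h2)
    linarith [hadj1, hadj2, hzero1, hzero2, hmid]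
  -- energy conversions
  have hIb : ∀ s : ℝ, (∫ x in (0:ℝ)..L, ((dT w x s) ^ 2 + D * (dX (dX w) x s) ^ 2))
      = ∫ x in (0:ℝ)..L, bE D w (x, s) := by
    intro s
    refine intervalIntegral.integral_congr fun x _ => ?_
    show (dT w x s) ^ 2 + D * (dX (dX w) x s) ^ 2 = bE D w (x, s)
    rw [cWT hw2, cW2 hw2]
    simp only [bE]
    ring
  have hIf : ∀ s : ℝ, (∫ q in upperHalfPlane2,
        ((ψ (s, q.1, q.2)) ^ 2 + (pX3 φ (s, q.1, q.2)) ^ 2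
          + (pZ3 φ (s, q.1, q.2)) ^ 2 + μ * (φ (s, q.1, q.2)) ^ 2))
      = ∫ q in upperHalfPlane2, fE U μ φ (s, q.1, q.2) := by
    intro s
    have hfun : (fun q : ℝ × ℝ => (ψ (s, q.1, q.2)) ^ 2 + (pX3 φ (s, q.1, q.2)) ^ 2
          + (pZ3 φ (s, q.1, q.2)) ^ 2 + μ * (φ (s, q.1, q.2)) ^ 2)
        = fun q : ℝ × ℝ => fE U μ φ (s, q.1, q.2) := by
      funext q
      rw [hψfun, hgX, hgZ]
      simp only [fE]
      ring
    rw [hfun]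
  have hdbl : (∫ τ in (0:ℝ)..b, ∫ x in (-R)..R, fQ U φ (τ, x, 0))
      = ∫ τ in (0:ℝ)..b, ∫ x in (0:ℝ)..L, (2 * WT w (x, τ) * PsiF U φ (τ, x, 0)
          + 2 * U * (W1 w (x, τ) * PsiF U φ (τ, x, 0))) := by
    refine intervalIntegral.integral_congr fun τ hτ => ?_
    rw [uIcc_of_le hb0] at hτ
    exact hKJ' τ ⟨hτ.1, hτ.2.trans hb.2⟩
  have cWTc : Continuous (WT w) := (WT_smooth hw2).continuous
  have cW1c : Continuous (W1 w) := (W1_smooth hw2).continuous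
  have hsplitIn : ∀ τ : ℝ, (∫ x in (0:ℝ)..L, (2 * WT w (x, τ) * PsiF U φ (τ, x, 0)
        + 2 * U * (W1 w (x, τ) * PsiF U φ (τ, x, 0))))
      = (∫ x in (0:ℝ)..L, 2 * WT w (x, τ) * PsiF U φ (τ, x, 0))
        + 2 * U * ∫ x in (0:ℝ)..L, W1 w (x, τ) * PsiF U φ (τ, x, 0) := by
    intro τ
    have c1 : Continuous fun x : ℝ => 2 * WT w (x, τ) * PsiF U φ (τ, x, 0) :=
      (continuous_const.mul (cWTc.comp (continuous_id.prodMk continuous_const))).mul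
        (cΨ.comp (continuous_const.prodMk (continuous_id.prodMk continuous_const)))
    have c2 : Continuous fun x : ℝ => W1 w (x, τ) * PsiF U φ (τ, x, 0) :=
      (cW1c.comp (continuous_id.prodMk continuous_const)).mul
        (cΨ.comp (continuous_const.prodMk (continuous_id.prodMk continuous_const)))
    rw [intervalIntegral.integral_add (c1.intervalIntegrable _ _)
      ((continuous_const.fun_mul c2).intervalIntegrable _ _),
      intervalIntegral.integral_const_mul]
  have cA : Continuous fun τ : ℝ => ∫ x in (0:ℝ)..L, 2 * WT w (x, τ) * PsiF U φ (τ, x, 0) := by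
    refine continuous_parametric_intervalIntegral_of_continuous'
      (f := fun τ x => 2 * WT w (x, τ) * PsiF U φ (τ, x, 0)) ?_ 0 L
    exact (continuous_const.mul (cWTc.comp (continuous_snd.prodMk continuous_fst))).mul
      (cΨ.comp (continuous_fst.prodMk (continuous_snd.prodMk continuous_const)))
  have cB : Continuous fun τ : ℝ => ∫ x in (0:ℝ)..L, W1 w (x, τ) * PsiF U φ (τ, x, 0) := by
    refine continuous_parametric_intervalIntegral_of_continuous'
      (f := fun τ x => W1 w (x, τ) * PsiF U φ (τ, x, 0)) ?_ 0 L
    exact (cW1c.comp (continuous_snd.prodMk continuous_fst)).mul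
      (cΨ.comp (continuous_fst.prodMk (continuous_snd.prodMk continuous_const)))
  have houter : (∫ τ in (0:ℝ)..b, ∫ x in (0:ℝ)..L, (2 * WT w (x, τ) * PsiF U φ (τ, x, 0)
        + 2 * U * (W1 w (x, τ) * PsiF U φ (τ, x, 0))))
      = (∫ τ in (0:ℝ)..b, ∫ x in (0:ℝ)..L, 2 * WT w (x, τ) * PsiF U φ (τ, x, 0))
        + 2 * U * ∫ τ in (0:ℝ)..b, ∫ x in (0:ℝ)..L, W1 w (x, τ) * PsiF U φ (τ, x, 0) := by
    rw [intervalIntegral.integral_congr (fun τ _ => hsplitIn τ)]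
    rw [intervalIntegral.integral_add (cA.intervalIntegrable _ _)
      ((continuous_const.fun_mul cB).intervalIntegrable _ _),
      intervalIntegral.integral_const_mul]
  have hBgoal : (∫ τ in (0:ℝ)..b, ∫ x in (0:ℝ)..L, W1 w (x, τ) * PsiF U φ (τ, x, 0))
      = ∫ τ in (0:ℝ)..b, ∫ x in (0:ℝ)..L, dX w x τ * ψ (τ, x, 0) := by
    refine intervalIntegral.integral_congr fun τ _ => ?_
    refine intervalIntegral.integral_congr fun x _ => ?_
    show W1 w (x, τ) * PsiF U φ (τ, x, 0) = dX w x τ * ψ (τ, x, 0)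
    rw [hψfun, cW1 hw2 x τ]
  have beamEq' : (∫ x in (0:ℝ)..L, bE D w (x, b)) - (∫ x in (0:ℝ)..L, bE D w (x, 0))
      = ∫ τ in (0:ℝ)..b, ∫ x in (0:ℝ)..L, 2 * WT w (x, τ) * PsiF U φ (τ, x, 0) := beamEq
  rw [hdbl, houter, hBgoal] at fluidEq
  rw [hℰ b, hℰ 0, hIb b, hIb 0, hIf b, hIf 0]
  linarith [fluidEq, beamEq']
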